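/- Fix an integer t ≥ 5 and a real number Y with e^{(t−1)/2} < Y < e^t. Then the number of integers n with e^{t−1} < n ≤ e^t such that Z(n) ≤ Y is at most 196 · Y · t². -/

import Mathlib

/-!
Let `m = Z n`. Since `2n ∣ m (m + 1)` and `m`, `m + 1` are coprime, `m (m + 1) = 2n · u v` with
`u ∣ m`, `v ∣ m + 1` coprime, and `n` is recovered from the triple `(u, v, m)`. In the range
`e^(t-1) < n`, `m ≤ Y` we get `u v = m (m + 1) / 2n ≤ e Y`. For fixed coprime `(u, v)` the
conditions `u ∣ m`, `v ∣ m + 1` cut out one residue class modulo `u v`, so at most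
`Y / (u v) + 1 ≤ (1 + e) Y / (u v)` values of `m`. Summing over `u, v ≤ e Y` bounds the count by
`(1 + e) Y · H_{eY}² ≤ 4 Y (t + 2)²`.
-/

/-- The m-th triangular number. -/
def T (m : ℕ) : ℕ := m * (m + 1) / 2

/-- The pseudo-Smarandache function: the least positive m with n ∣ T m. -/
noncomputable def Z (n : ℕ) : ℕ := sInf {m : ℕ | 0 < m ∧ n ∣ T m}

open Finset

lemma two_mul_T (m : ℕ) : 2 * T m = m * (m + 1) :=
  Nat.mul_div_cancel' (Nat.even_mul_succ_self m).two_dvd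

lemma Z_pos_and_dvd_T {n : ℕ} (hn : 0 < n) : 0 < Z n ∧ n ∣ T (Z n) := by
  refine Nat.sInf_mem (s := {m | 0 < m ∧ n ∣ T m}) ⟨2 * n, by positivity, Dvd.intro (2 * n + 1) ?_⟩
  rw [T, mul_assoc, Nat.mul_div_cancel_left _ two_pos]

lemma Nat.exists_cofactors_of_dvd_mul {c x y : ℕ} (h : c ∣ x * y) :
    ∃ u v, u ∣ x ∧ v ∣ y ∧ x * y = c * (u * v) := by
  obtain ⟨a, b, ⟨u, rfl⟩, ⟨v, rfl⟩, rfl⟩ := Nat.dvd_mul.mp h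
  exact ⟨u, v, Dvd.intro_left _ rfl, Dvd.intro_left _ rfl, by ring⟩

lemma exists_cofactors_of_dvd_T {n m : ℕ} (h : n ∣ T m) :
    ∃ u v, u ∣ m ∧ v ∣ m + 1 ∧ u.Coprime v ∧ m * (m + 1) = 2 * n * (u * v) := by
  have h2n : 2 * n ∣ m * (m + 1) := two_mul_T m ▸ mul_dvd_mul_left 2 h
  obtain ⟨u, v, hu, hv, huv⟩ := Nat.exists_cofactors_of_dvd_mul h2n
  have hcop : m.Coprime (m + 1) := Nat.coprime_self_add_right.mpr (Nat.coprime_one_right m)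
  exact ⟨u, v, hu, hv, hcop.of_dvd hu hv, huv⟩

lemma card_le_div_add_one_of_modEq {s : Finset ℕ} {N d : ℕ} (hs : ∀ m ∈ s, m ≤ N)
    (hmod : ∀ a ∈ s, ∀ b ∈ s, a ≡ b [MOD d]) : #s ≤ N / d + 1 := by
  -- within one residue class, `m` is determined by `m / d`
  calc #s ≤ #(range (N / d + 1)) := by
        refine card_le_card_of_injOn (· / d) (fun m hm => ?_) (fun a ha b hb hab => ?_)
        · simpa [Nat.lt_succ_iff] using Nat.div_le_div_right (c := d) (hs m hm)
        · calc a = d * (a / d) + a % d := (Nat.div_add_mod a d).symm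
            _ = d * (b / d) + b % d := by
              rw [show a / d = b / d from hab, show a % d = b % d from hmod a ha b hb]
            _ = b := Nat.div_add_mod b d
    _ = N / d + 1 := card_range _

def dvdSuccSolutions (N u v : ℕ) : Finset ℕ := {m ∈ Iic N | u ∣ m ∧ v ∣ m + 1}

lemma card_dvdSuccSolutions_le {N u v : ℕ} (huv : u.Coprime v) :
    #(dvdSuccSolutions N u v) ≤ N / (u * v) + 1 := by
  refine card_le_div_add_one_of_modEq (fun m hm => mem_Iic.mp (mem_filter.mp hm).1) ?_
  intro a ha b hb
  simp only [dvdSuccSolutions, mem_filter] at ha hb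
  refine (Nat.modEq_and_modEq_iff_modEq_mul huv).mp ⟨?_, Nat.ModEq.add_right_cancel' 1 ?_⟩
  · exact (Nat.modEq_zero_iff_dvd.mpr ha.2.1).trans (Nat.modEq_zero_iff_dvd.mpr hb.2.1).symm
  · exact (Nat.modEq_zero_iff_dvd.mpr ha.2.2).trans (Nat.modEq_zero_iff_dvd.mpr hb.2.2).symm

def coprimePairsMulLe (K : ℕ) : Finset (ℕ × ℕ) :=
  {q ∈ Icc 1 K ×ˢ Icc 1 K | q.1.Coprime q.2 ∧ q.1 * q.2 ≤ K}

lemma sum_card_dvdSuccSolutions_le (N K : ℕ) :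
    (∑ q ∈ coprimePairsMulLe K, #(dvdSuccSolutions N q.1 q.2) : ℝ) ≤
      (N + K) * harmonic K ^ 2 := by
  have hH : (harmonic K : ℝ) = ∑ u ∈ Icc 1 K, (u : ℝ)⁻¹ := by
    rw [harmonic_eq_sum_Icc]
    push_cast
    rfl
  have hterm : ∀ q ∈ coprimePairsMulLe K,
      (#(dvdSuccSolutions N q.1 q.2) : ℝ) ≤ (N + K) * ((q.1 : ℝ)⁻¹ * (q.2 : ℝ)⁻¹) := by
    intro q hq
    simp only [coprimePairsMulLe, mem_filter, mem_product, mem_Icc] at hq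
    obtain ⟨⟨⟨hu, -⟩, hv, -⟩, hcop, hK⟩ := hq
    have huv : (0 : ℝ) < q.1 * q.2 := by positivity
    have hKuv : 1 ≤ (K : ℝ) / (q.1 * q.2) := by
      rw [one_le_div huv]
      exact_mod_cast hK
    calc (#(dvdSuccSolutions N q.1 q.2) : ℝ) ≤ ((N / (q.1 * q.2) + 1 : ℕ) : ℝ) := by
          exact_mod_cast card_dvdSuccSolutions_le hcop
      _ ≤ N / (q.1 * q.2) + K / (q.1 * q.2) := by
          push_cast
          gcongr
          exact_mod_cast Nat.cast_div_le (α := ℝ) (m := N) (n := q.1 * q.2)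
      _ = (N + K) * ((q.1 : ℝ)⁻¹ * (q.2 : ℝ)⁻¹) := by
          field_simp
  calc (∑ q ∈ coprimePairsMulLe K, #(dvdSuccSolutions N q.1 q.2) : ℝ)
      ≤ ∑ q ∈ coprimePairsMulLe K, (N + K : ℝ) * ((q.1 : ℝ)⁻¹ * (q.2 : ℝ)⁻¹) :=
        sum_le_sum hterm
    _ ≤ ∑ q ∈ Icc 1 K ×ˢ Icc 1 K, (N + K : ℝ) * ((q.1 : ℝ)⁻¹ * (q.2 : ℝ)⁻¹) :=
        sum_le_sum_of_subset_of_nonneg (filter_subset _ _) fun _ _ _ => by positivity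
    _ = (N + K) * harmonic K ^ 2 := by
        rw [← mul_sum, sum_product]
        dsimp only
        rw [← sum_mul_sum, hH, sq]

lemma exists_cofactors_of_Z_le {n N K : ℕ} (hn : 0 < n) (hZN : Z n ≤ N)
    (hZK : Z n * (Z n + 1) / (2 * n) ≤ K) :
    ∃ q ∈ coprimePairsMulLe K, ∃ m ∈ dvdSuccSolutions N q.1 q.2,
      m * (m + 1) / (2 * (q.1 * q.2)) = n := by
  obtain ⟨hZ0, hdvd⟩ := Z_pos_and_dvd_T hn
  obtain ⟨u, v, hu, hv, hcop, heq⟩ := exists_cofactors_of_dvd_T hdvd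
  have huv0 : 0 < u * v := by
    refine Nat.pos_of_ne_zero fun h => ?_
    rw [h, mul_zero] at heq
    exact (Nat.mul_pos hZ0 (Nat.succ_pos _)).ne' heq
  obtain ⟨hu0, hv0⟩ := CanonicallyOrderedAdd.mul_pos.mp huv0
  have huvK : u * v ≤ K := by
    rwa [heq, Nat.mul_div_cancel_left _ (by positivity)] at hZK
  refine ⟨(u, v), ?_, Z n, ?_, ?_⟩
  · simp only [coprimePairsMulLe, mem_filter, mem_product, mem_Icc]
    exact ⟨⟨⟨hu0, (Nat.le_mul_of_pos_right u hv0).trans huvK⟩,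
      hv0, (Nat.le_mul_of_pos_left v hu0).trans huvK⟩, hcop, huvK⟩
  · simp [dvdSuccSolutions, hZN, hu, hv]
  · rw [heq, show 2 * n * (u * v) = n * (2 * (u * v)) by ring, Nat.mul_div_cancel _ (by positivity)]

lemma ncard_le_of_forall_Z_le {A : Set ℕ} {N K : ℕ}
    (hA : ∀ n ∈ A, 0 < n ∧ Z n ≤ N ∧ Z n * (Z n + 1) / (2 * n) ≤ K) :
    (A.ncard : ℝ) ≤ (N + K) * harmonic K ^ 2 := by
  have hsub : A ⊆ ↑((coprimePairsMulLe K).biUnion fun q =>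
      (dvdSuccSolutions N q.1 q.2).image fun m => m * (m + 1) / (2 * (q.1 * q.2))) := by
    intro n hn
    obtain ⟨hn0, hZN, hZK⟩ := hA n hn
    simpa using exists_cofactors_of_Z_le hn0 hZN hZK
  have hcard : A.ncard ≤ ∑ q ∈ coprimePairsMulLe K, #(dvdSuccSolutions N q.1 q.2) :=
    (Set.ncard_le_ncard hsub).trans_eq (Set.ncard_coe_finset _) |>.trans <|
      card_biUnion_le.trans (sum_le_sum fun _ _ => card_image_le)
  calc (A.ncard : ℝ) ≤ ∑ q ∈ coprimePairsMulLe K, (#(dvdSuccSolutions N q.1 q.2) : ℝ) := by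
        exact_mod_cast hcard
    _ ≤ (N + K) * harmonic K ^ 2 := sum_card_dvdSuccSolutions_le N K

lemma cast_mul_succ_div_le {m n : ℕ} {Y c : ℝ} (hY : 1 ≤ Y) (hm : (m : ℝ) ≤ Y)
    (hn : Y ≤ c * n) : ((m * (m + 1) / (2 * n) : ℕ) : ℝ) ≤ c * Y := by
  have hn0 : (0 : ℝ) < n := (Nat.cast_nonneg n).lt_of_ne fun h => by
    rw [← h, mul_zero] at hn
    linarith
  calc ((m * (m + 1) / (2 * n) : ℕ) : ℝ) ≤ (m : ℝ) * (m + 1) / (2 * n) := by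
        exact_mod_cast Nat.cast_div_le
    _ ≤ c * Y := by
        rw [div_le_iff₀ (by positivity)]
        calc (m : ℝ) * (m + 1) ≤ Y * (2 * Y) := by gcongr; linarith
          _ ≤ 2 * Y * (c * n) := by nlinarith
          _ = c * Y * (2 * n) := by ring

theorem stmt_16 (t : ℕ) (ht : 5 ≤ t) (Y : ℝ)
    (hY1 : Real.exp ((t - 1 : ℝ) / 2) < Y) (hY2 : Y < Real.exp t) :
    ({n : ℕ | Real.exp (t - 1 : ℝ) < n ∧ (n : ℝ) ≤ Real.exp t ∧ (Z n : ℝ) ≤ Y}.ncard : ℝ)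
      ≤ 196 * Y * t ^ 2 := by
  have ht1 : (1 : ℝ) ≤ t := by exact_mod_cast (show 1 ≤ t by omega)
  have hY : 1 ≤ Y := (Real.one_le_exp (by linarith)).trans hY1.le
  have heY : 1 ≤ Real.exp 1 * Y := one_le_mul_of_one_le_of_one_le (Real.one_le_exp zero_le_one) hY
  have hS : ∀ n ∈ {n : ℕ | Real.exp (t - 1 : ℝ) < n ∧ (n : ℝ) ≤ Real.exp t ∧ (Z n : ℝ) ≤ Y},
      0 < n ∧ Z n ≤ ⌊Y⌋₊ ∧ Z n * (Z n + 1) / (2 * n) ≤ ⌊Real.exp 1 * Y⌋₊ := by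
    rintro n ⟨hn, -, hZ⟩
    have hYn : Y ≤ Real.exp 1 * n :=
      calc Y ≤ Real.exp t := hY2.le
        _ = Real.exp 1 * Real.exp (t - 1 : ℝ) := by rw [← Real.exp_add]; ring_nf
        _ ≤ Real.exp 1 * n := by gcongr
    exact ⟨by exact_mod_cast (Real.exp_pos _).trans hn, Nat.le_floor hZ,
      Nat.le_floor (cast_mul_succ_div_le hY hZ hYn)⟩
  have hH0 : (0 : ℝ) ≤ harmonic ⌊Real.exp 1 * Y⌋₊ := by
    exact_mod_cast (harmonic_pos (Nat.floor_pos.mpr heY).ne').le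
  have hH : (harmonic ⌊Real.exp 1 * Y⌋₊ : ℝ) ≤ t + 2 := by
    refine (harmonic_floor_le_one_add_log _ heY).trans ?_
    rw [Real.log_mul (Real.exp_pos 1).ne' (by positivity), Real.log_exp]
    linarith [(Real.log_lt_iff_lt_exp (by positivity)).mpr hY2]
  calc _ ≤ (⌊Y⌋₊ + ⌊Real.exp 1 * Y⌋₊) * (harmonic ⌊Real.exp 1 * Y⌋₊ : ℝ) ^ 2 :=
        ncard_le_of_forall_Z_le hS
    _ ≤ (Y + 3 * Y) * (7 * t) ^ 2 := by
        gcongr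
        · exact Nat.floor_le (by positivity)
        · exact (Nat.floor_le (by positivity)).trans (by nlinarith [Real.exp_one_lt_d9])
        · linarith
    _ = 196 * Y * t ^ 2 := by ring
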